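/- arXiv:2510.09425 — 3 statements merged into one kernel-verified Lean document; each statement's English description precedes it below -/
import Mathlib

section
/- Let P be single-peaked w.r.t. ≺ and let P̃ satisfy ‖P̃ − P‖_∞ ≤ ε. Fix a row u and let k₁,…,k_K be a permutation of the columns with P̃_{u,k₁} ≥ ⋯ ≥ P̃_{u,k_K}. If for some index m it holds that P̃_{u,k_m} − P̃_{u,k_{m+1}} > 2ε, then the set {k₁,…,k_m} is contiguous in the order ≺; i.e., there are no i, l ∈ {k₁,…,k_m} and j ∉ {k₁,…,k_m} with i ≺ j ≺ l. -/
/-- A vector `v` is unimodal with peak `p`. -/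
def Unimodal {K : ℕ} (v : Fin K → ℝ) (p : Fin K) : Prop :=
  (∀ i j : Fin K, i ≤ j → j ≤ p → v i ≤ v j) ∧
  (∀ i j : Fin K, p ≤ i → i ≤ j → v j ≤ v i)

/-- let `P` be single-peaked w.r.t. the order `σ` and let `Pt`
be entrywise within `ε` of `P`. Fix a row `u` and a permutation `τ` sorting
row `u` of `Pt` in descending order (`τ 0, τ 1, …` is the sorted column
sequence). If the gap between the `m`-th and `(m+1)`-th sorted values exceeds
`2ε`, then the top-`m` set `{k : τ.symm k ≤ m}` is contiguous in the order
`σ`: no column outside it lies between two of its columns. -/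
theorem top_set_contiguous {U K : ℕ}
    (P Pt : Fin U → Fin K → ℝ) (σ τ : Equiv.Perm (Fin K)) (ε : ℝ)
    (hSP : ∀ u : Fin U, ∃ p : Fin K, Unimodal (fun i => P u (σ i)) p)
    (hdist : ∀ u k, |Pt u k - P u k| ≤ ε)
    (u : Fin U)
    (hsort : ∀ a b : Fin K, a ≤ b → Pt u (τ b) ≤ Pt u (τ a))
    (m : Fin K) (hm : (m : ℕ) + 1 < K)
    (hgap : Pt u (τ m) - Pt u (τ ⟨(m : ℕ) + 1, hm⟩) > 2 * ε) :
    ∀ i j l : Fin K, τ.symm i ≤ m → τ.symm l ≤ m → ¬(τ.symm j ≤ m) →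
      ¬(σ.symm i < σ.symm j ∧ σ.symm j < σ.symm l) := by
  intro i j l hi hl hj ⟨hij, hjl⟩
  -- key: any top element has strictly larger P value than any non-top element
  have key : ∀ a b : Fin K, τ.symm a ≤ m → ¬(τ.symm b ≤ m) → P u b < P u a := by
    intro a b ha hb
    have h1 : Pt u (τ m) ≤ Pt u a := by
      have := hsort (τ.symm a) m ha
      simpa using this
    have h2 : Pt u b ≤ Pt u (τ ⟨(m : ℕ) + 1, hm⟩) := by
      have hmb : (⟨(m : ℕ) + 1, hm⟩ : Fin K) ≤ τ.symm b := by
        have : (m : Fin K) < τ.symm b := lt_of_not_ge hb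
        exact this
      have := hsort ⟨(m : ℕ) + 1, hm⟩ (τ.symm b) hmb
      simpa using this
    have da := abs_le.mp (hdist u a)
    have db := abs_le.mp (hdist u b)
    linarith
  obtain ⟨p, hup, hdown⟩ := hSP u
  have hPi : P u j < P u i := key i j hi hj
  have hPl : P u j < P u l := key l j hl hj
  rcases le_total (σ.symm j) p with hp | hp
  · have := hup (σ.symm i) (σ.symm j) hij.le hp
    simp only [Equiv.apply_symm_apply] at this
    linarith
  · have := hdown (σ.symm j) (σ.symm l) hp hjl.le
    simp only [Equiv.apply_symm_apply] at this
    linarith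
end

section
/- Consider the dynamic program on a unimodal-rows matrix P (with auxiliary arm 0 of cost 0 and value 0), budget B, and costs c_k ≤ B: define F(0,b)=0 and F(k,b) = max over 0 ≤ i < k with c_i + c_k ≤ b of [F(i, b − c_k) + Σ_{u : i < p(u) ≤ k} max{P_{u,i}, P_{u,k}}]. Then max_{k∈[K]} [F(k,B) + Σ_{u: p(u) > k} P_{u,k}] equals the maximum of Σ_u max_{k∈S} P_{u,k} over all nonempty S ⊆ [K] with Σ_{k∈S} c_k ≤ B. -/
/-- `G P p i k = Σ_{u : i < p(u) ≤ k} max (P u i) (P u k)`. -/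
noncomputable def G {U : ℕ} (P : Fin U → ℕ → ℝ) (p : Fin U → ℕ) (i k : ℕ) : ℝ :=
  ∑ u : Fin U, if i < p u ∧ p u ≤ k then max (P u i) (P u k) else 0

/-- The dynamic-programming table: `F c g 0 b = 0` and
`F c g (k+1) b = max over 0 ≤ i < k+1 with c i + c (k+1) ≤ b of
  F c g i (b - c (k+1)) + g i (k+1)` (and `0` if no such `i` exists). -/
noncomputable def F (c : ℕ → ℕ) (g : ℕ → ℕ → ℝ) : ℕ → ℕ → ℝ
  | 0, _ => 0
  | (k + 1), b =>
    if h : ((Finset.range (k + 1)).filter (fun i => c i + c (k + 1) ≤ b)).Nonempty then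
      ((Finset.range (k + 1)).filter (fun i => c i + c (k + 1) ≤ b)).attach.sup'
        (Finset.attach_nonempty_iff.mpr h)
        (fun i => F c g i.1 (b - c (k + 1)) + g i.1 (k + 1))
    else 0
  termination_by k _ => k
  decreasing_by
    exact Nat.lt_succ_iff.mpr
      (Nat.lt_succ_iff.mp (Finset.mem_range.mp (Finset.mem_filter.mp i.2).1))

section Helpers

variable {U : ℕ} (P : Fin U → ℕ → ℝ) (c : ℕ → ℕ) (p : Fin U → ℕ)

lemma F_ge (g : ℕ → ℕ → ℝ) {k b : ℕ} (i : ℕ) (hi : i < k) (hle : c i + c k ≤ b) :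
    F c g i (b - c k) + g i k ≤ F c g k b := by
  obtain ⟨k', rfl⟩ : ∃ k', k = k' + 1 := ⟨k - 1, by omega⟩
  rw [F]
  have hmem : i ∈ (Finset.range (k' + 1)).filter (fun j => c j + c (k' + 1) ≤ b) := by
    simp [Finset.mem_filter, Finset.mem_range, hi, hle]
  rw [dif_pos ⟨i, hmem⟩]
  exact Finset.le_sup' (fun j => F c g j.1 (b - c (k' + 1)) + g j.1 (k' + 1))
    (Finset.mem_attach _ ⟨i, hmem⟩)

lemma F_exists (g : ℕ → ℕ → ℝ) {k b : ℕ} (hk : 1 ≤ k) (hc0 : c 0 = 0) (hck : c k ≤ b) :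
    ∃ i, i < k ∧ c i + c k ≤ b ∧ F c g k b = F c g i (b - c k) + g i k := by
  obtain ⟨k', rfl⟩ : ∃ k', k = k' + 1 := ⟨k - 1, by omega⟩
  have h0 : (0 : ℕ) ∈ (Finset.range (k' + 1)).filter (fun j => c j + c (k' + 1) ≤ b) := by
    simp [Finset.mem_filter, Finset.mem_range, hc0, hck]
  have hne : ((Finset.range (k' + 1)).filter (fun j => c j + c (k' + 1) ≤ b)).Nonempty := ⟨0, h0⟩
  rw [F, dif_pos hne]
  obtain ⟨i, hi, heq⟩ := Finset.exists_mem_eq_sup' (Finset.attach_nonempty_iff.mpr hne)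
    (fun j => F c g j.1 (b - c (k' + 1)) + g j.1 (k' + 1))
  refine ⟨i.1, ?_, ?_, heq⟩
  · exact Finset.mem_range.mp (Finset.mem_filter.mp i.2).1
  · exact (Finset.mem_filter.mp i.2).2

variable (hP0 : ∀ u, P u 0 = 0) (hPnn : ∀ u k, 0 ≤ P u k)
  (hpeak1 : ∀ u, 1 ≤ p u)
  (hup : ∀ u, ∀ i j : ℕ, i ≤ j → j ≤ p u → P u i ≤ P u j)

include hP0 hPnn hpeak1 in
/-- For a singleton: `Σ_u P u k = G 0 k + tail k`. -/
lemma single_eq (k : ℕ) :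
    (∑ u : Fin U, P u k) =
      G P p 0 k + ∑ u : Fin U, (if k < p u then P u k else 0) := by
  rw [G, ← Finset.sum_add_distrib]
  refine Finset.sum_congr rfl fun u _ => ?_
  by_cases h : p u ≤ k
  · rw [if_pos ⟨hpeak1 u, h⟩, if_neg (by omega), hP0, max_eq_right (hPnn u k), add_zero]
  · rw [if_neg (by omega), if_pos (by omega), zero_add]

include hP0 hPnn hpeak1 hup in
/-- Lemma B: the DP value is dominated by some feasible set. -/
lemma lemB (hc0 : c 0 = 0) :
    ∀ k, 1 ≤ k → ∀ b, c k ≤ b →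
    ∃ (S : Finset ℕ) (hS : S.Nonempty), (∀ j ∈ S, 1 ≤ j ∧ j ≤ k) ∧ k ∈ S ∧
      (∑ j ∈ S, c j) ≤ b ∧
      F c (G P p) k b + (∑ u : Fin U, if k < p u then P u k else 0) ≤
        ∑ u : Fin U, S.sup' hS (P u) := by
  intro k
  induction k using Nat.strong_induction_on with
  | _ k IH =>
  intro hk b hckb
  obtain ⟨i, hik, hcic, hFeq⟩ := F_exists c (G P p) hk hc0 hckb
  by_cases hi0 : i = 0
  · subst hi0
    refine ⟨{k}, ⟨k, Finset.mem_singleton_self k⟩, fun j hj => ?_, Finset.mem_singleton_self k,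
      ?_, ?_⟩
    · rw [Finset.mem_singleton] at hj; omega
    · simpa using hckb
    · simp only [Finset.sup'_singleton]
      rw [hFeq, F]
      rw [single_eq P p hP0 hPnn hpeak1 k]
      simp
  · have hi1 : 1 ≤ i := by omega
    obtain ⟨S', hS', hS'k, hiS', hcostS', hvalS'⟩ :=
      IH i hik hi1 (b - c k) (by omega)
    have hkS' : k ∉ S' := fun h => by have := (hS'k k h).2; omega
    refine ⟨insert k S', Finset.insert_nonempty _ _, fun j hj => ?_,
      Finset.mem_insert_self _ _, ?_, ?_⟩
    · rcases Finset.mem_insert.mp hj with rfl | hj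
      · omega
      · have := hS'k j hj; omega
    · rw [Finset.sum_insert hkS']; omega
    · -- main inequality
      have hpt : ∀ u : Fin U,
          S'.sup' hS' (P u) + (if i < p u ∧ p u ≤ k then max (P u i) (P u k) else 0)
            + (if k < p u then P u k else 0) ≤
          (insert k S').sup' (Finset.insert_nonempty _ _) (P u)
            + (if i < p u then P u i else 0) := by
        intro u
        have hiIn : P u i ≤ (insert k S').sup' (Finset.insert_nonempty _ _) (P u) :=
          Finset.le_sup' _ (Finset.mem_insert_of_mem hiS')
        have hkIn : P u k ≤ (insert k S').sup' (Finset.insert_nonempty _ _) (P u) :=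
          Finset.le_sup' _ (Finset.mem_insert_self _ _)
        have hS'le : ∀ j ∈ S', j ≤ i := fun j hj => (hS'k j hj).2
        by_cases h1 : i < p u
        · have hsup : S'.sup' hS' (P u) ≤ P u i := by
            apply Finset.sup'_le
            intro j hj
            exact hup u j i (hS'le j hj) (by omega)
          by_cases h2 : p u ≤ k
          · rw [if_pos ⟨h1, h2⟩, if_neg (by omega), if_pos h1]
            have : max (P u i) (P u k) ≤
                (insert k S').sup' (Finset.insert_nonempty _ _) (P u) := max_le hiIn hkIn
            linarith
          · rw [if_neg (by omega), if_pos (by omega), if_pos h1]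
            linarith
        · rw [if_neg (by omega), if_neg (by omega), if_neg h1]
          have hss : S'.sup' hS' (P u) ≤ (insert k S').sup' (Finset.insert_nonempty _ _) (P u) := by
            apply Finset.sup'_le
            intro j hj
            exact Finset.le_sup' _ (Finset.mem_insert_of_mem hj)
          linarith
      have hsum := Finset.sum_le_sum (fun u (_ : u ∈ Finset.univ) => hpt u)
      rw [Finset.sum_add_distrib, Finset.sum_add_distrib, Finset.sum_add_distrib] at hsum
      rw [hFeq, G]
      linarith

include hP0 hPnn hpeak1 hup in
/-- Lemma A: any feasible set's value is dominated by the DP value at its max. -/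
lemma lemA {K : ℕ} (hc0 : c 0 = 0)
    (hdown : ∀ u, ∀ i j : ℕ, p u ≤ i → i ≤ j → j ≤ K → P u j ≤ P u i) :
    ∀ n (S : Finset ℕ) (hS : S.Nonempty), S.card ≤ n → (∀ j ∈ S, 1 ≤ j ∧ j ≤ K) →
    ∀ b, (∑ j ∈ S, c j) ≤ b →
      (∑ u : Fin U, S.sup' hS (P u)) ≤
        F c (G P p) (S.max' hS) b +
          ∑ u : Fin U, (if S.max' hS < p u then P u (S.max' hS) else 0) := by
  intro n
  induction n with
  | zero => intro S hS hcard; exact absurd (Finset.card_pos.mpr hS) (by omega)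
  | succ n IH =>
  intro S hS hcard hSK b hcost
  set k := S.max' hS with hkdef
  have hkS : k ∈ S := S.max'_mem hS
  have hk1 : 1 ≤ k := (hSK k hkS).1
  have hkK : k ≤ K := (hSK k hkS).2
  have hckb : c k ≤ b := le_trans (Finset.single_le_sum (fun j _ => Nat.zero_le (c j)) hkS) hcost
  by_cases hS' : (S.erase k).Nonempty
  · set S' := S.erase k with hS'def
    set i := S'.max' hS' with hidef
    have hiS' : i ∈ S' := S'.max'_mem hS'
    have hiS : i ∈ S := Finset.mem_of_mem_erase hiS'
    have hik : i < k := lt_of_le_of_ne (S.le_max' i hiS) (Finset.ne_of_mem_erase hiS')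
    have hS'le : ∀ j ∈ S', j ≤ i := fun j hj => S'.le_max' j hj
    have hcostS : (∑ j ∈ S', c j) + c k = ∑ j ∈ S, c j := by
      rw [add_comm, ← Finset.sum_insert (Finset.notMem_erase k S), Finset.insert_erase hkS]
    have hcardS' : S'.card = S.card - 1 := by
      rw [hS'def]; exact Finset.card_erase_of_mem hkS
    have hcard1 : 1 ≤ S.card := Finset.card_pos.mpr hS
    have hIH := IH S' hS' (by omega)
      (fun j hj => hSK j (Finset.mem_of_mem_erase hj)) (b - c k) (by omega)
    rw [← hidef] at hIH
    have hci : c i ≤ ∑ j ∈ S', c j :=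
      Finset.single_le_sum (fun j _ => Nat.zero_le (c j)) hiS'
    have hFge : F c (G P p) i (b - c k) + G P p i k ≤ F c (G P p) k b :=
      F_ge c (G P p) i hik (by omega)
    -- pointwise inequality
    have hpt : ∀ u : Fin U,
        S.sup' hS (P u) + (if i < p u then P u i else 0) ≤
        S'.sup' hS' (P u) + (if i < p u ∧ p u ≤ k then max (P u i) (P u k) else 0)
          + (if k < p u then P u k else 0) := by
      intro u
      have hiIn : P u i ≤ S'.sup' hS' (P u) := Finset.le_sup' _ hiS'
      have hmemS : ∀ j ∈ S, j = k ∨ j ∈ S' := fun j hj => by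
        by_cases h : j = k
        · exact Or.inl h
        · exact Or.inr (Finset.mem_erase.mpr ⟨h, hj⟩)
      by_cases h1 : i < p u
      · by_cases h2 : p u ≤ k
        · rw [if_pos h1, if_pos ⟨h1, h2⟩, if_neg (by omega)]
          have hsupS : S.sup' hS (P u) ≤ max (P u i) (P u k) := by
            apply Finset.sup'_le
            intro j hj
            rcases hmemS j hj with heq | hj'
            · rw [heq]; exact le_max_right _ _
            · exact le_trans (hup u j i (hS'le j hj') (by omega)) (le_max_left _ _)
          linarith
        · rw [if_pos h1, if_neg (by omega), if_pos (by omega)]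
          have hsupS : S.sup' hS (P u) ≤ P u k := by
            apply Finset.sup'_le
            intro j hj
            exact hup u j k (S.le_max' j hj) (by omega)
          linarith
      · rw [if_neg h1, if_neg (by omega), if_neg (by omega)]
        have hsupS : S.sup' hS (P u) ≤ S'.sup' hS' (P u) := by
          apply Finset.sup'_le
          intro j hj
          rcases hmemS j hj with heq | hj'
          · rw [heq]; exact le_trans (hdown u i k (by omega) (le_of_lt hik) hkK) hiIn
          · exact Finset.le_sup' _ hj'
        linarith
    have hsum := Finset.sum_le_sum (fun u (_ : u ∈ Finset.univ) => hpt u)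
    rw [Finset.sum_add_distrib, Finset.sum_add_distrib, Finset.sum_add_distrib] at hsum
    rw [G] at hFge
    linarith
  · -- S = {k}
    have hSsing : S = {k} := by
      apply Finset.eq_singleton_iff_unique_mem.mpr
      refine ⟨hkS, fun j hj => ?_⟩
      by_contra h
      exact hS' ⟨j, Finset.mem_erase.mpr ⟨h, hj⟩⟩
    have hsup : ∀ u : Fin U, S.sup' hS (P u) = P u k := by
      intro u
      refine le_antisymm (Finset.sup'_le _ _ fun j hj => ?_) (Finset.le_sup' _ hkS)
      have : j = k := by rw [hSsing] at hj; simpa using hj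
      rw [this]
    simp only [hsup]
    have hFge : F c (G P p) 0 (b - c k) + G P p 0 k ≤ F c (G P p) k b :=
      F_ge c (G P p) 0 (by omega) (by omega)
    rw [F] at hFge
    rw [single_eq P p hP0 hPnn hpeak1 k]
    linarith

end Helpers

/-- correctness of the dynamic program. Arms are `1, …, K`
with an auxiliary arm `0` of zero cost and zero value; rows of `P` are
unimodal with peaks `p u ∈ [1, K]`. Then
`max_{k ∈ [1,K]} (F(k, B) + Σ_{u : p(u) > k} P u k)` is the greatest value of
`Σ_u max_{k ∈ S} P u k` over all nonempty `S ⊆ [1, K]` with `Σ_{k∈S} c k ≤ B`. -/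
theorem sp_matching_correct {U K B : ℕ} (hK : 1 ≤ K)
    (P : Fin U → ℕ → ℝ) (c : ℕ → ℕ) (p : Fin U → ℕ)
    (hc0 : c 0 = 0) (hP0 : ∀ u, P u 0 = 0) (hPnn : ∀ u k, 0 ≤ P u k)
    (hcost : ∀ k, 1 ≤ k → k ≤ K → 1 ≤ c k ∧ c k ≤ B)
    (hpeak : ∀ u, 1 ≤ p u ∧ p u ≤ K)
    (hup : ∀ u, ∀ i j : ℕ, i ≤ j → j ≤ p u → P u i ≤ P u j)
    (hdown : ∀ u, ∀ i j : ℕ, p u ≤ i → i ≤ j → j ≤ K → P u j ≤ P u i) :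
    IsGreatest
      { v : ℝ | ∃ (S : Finset ℕ) (hS : S.Nonempty),
          (∀ k ∈ S, 1 ≤ k ∧ k ≤ K) ∧ (∑ k ∈ S, c k) ≤ B ∧
          v = ∑ u : Fin U, S.sup' hS (P u) }
      ((Finset.Icc 1 K).sup' (Finset.nonempty_Icc.mpr hK)
        (fun k => F c (G P p) k B +
          ∑ u : Fin U, if k < p u then P u k else 0)) := by
  constructor
  · -- membership
    obtain ⟨k, hkmem, hEq⟩ := Finset.exists_mem_eq_sup' (Finset.nonempty_Icc.mpr hK)
      (fun k => F c (G P p) k B + ∑ u : Fin U, if k < p u then P u k else 0)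
    rw [Finset.mem_Icc] at hkmem
    obtain ⟨S, hS, hSk, hkS, hcostS, hval⟩ := lemB P c p hP0 hPnn (fun u => (hpeak u).1)
      hup hc0 k hkmem.1 B (hcost k hkmem.1 hkmem.2).2
    have hSK : ∀ j ∈ S, 1 ≤ j ∧ j ≤ K := fun j hj => ⟨(hSk j hj).1, le_trans (hSk j hj).2 hkmem.2⟩
    have hub : (∑ u : Fin U, S.sup' hS (P u)) ≤
        (Finset.Icc 1 K).sup' (Finset.nonempty_Icc.mpr hK)
          (fun k => F c (G P p) k B + ∑ u : Fin U, if k < p u then P u k else 0) := by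
      have h1 := lemA P c p hP0 hPnn (fun u => (hpeak u).1) hup hc0 hdown
        S.card S hS le_rfl hSK B hcostS
      refine le_trans h1 (Finset.le_sup'
        (f := fun k => F c (G P p) k B + ∑ u : Fin U, if k < p u then P u k else 0) ?_)
      rw [Finset.mem_Icc]
      exact hSK _ (S.max'_mem hS)
    refine ⟨S, hS, hSK, hcostS, ?_⟩
    rw [hEq]
    linarith
  · -- upper bound
    rintro v ⟨S, hS, hSK, hcostS, rfl⟩
    have h1 := lemA P c p hP0 hPnn (fun u => (hpeak u).1) hup hc0 hdown
      S.card S hS le_rfl hSK B hcostS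
    refine le_trans h1 (Finset.le_sup'
      (f := fun k => F c (G P p) k B + ∑ u : Fin U, if k < p u then P u k else 0) ?_)
    rw [Finset.mem_Icc]
    exact hSK _ (S.max'_mem hS)
end

section
/- Let P be single-peaked with peaks p(·) and let S = {k₁ < ⋯ < k_m} be a set of selected columns. Then Σ_u max_{k∈S} P_{u,k} = Σ_{j=1}^{m} Σ_{u: k_{j-1} < p(u) ≤ k_j} max{P_{u,k_{j-1}}, P_{u,k_j}} + Σ_{u: p(u) > k_m} P_{u,k_m}, where k₀ = 0 is an auxiliary column with P_{u,0} = 0 ≤ P_{u,k} for all u, k. -/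
/-- decomposition of the matching value of a selected set.
Columns are `1, …, K` with an auxiliary column `0` of value 0; rows of `P`
are unimodal with peaks `p u ∈ [1, K]`. The selected columns are
`a 1 < a 2 < ⋯ < a m` (with `a 0 = 0` the auxiliary column). Then the total
best-response value `Σ_u max_{k ∈ S} P u k` decomposes by the interval in
which each user's peak lies. -/
theorem matching_value_decomposition {U K m : ℕ} (hm : 1 ≤ m)
    (P : Fin U → ℕ → ℝ) (p : Fin U → ℕ) (a : ℕ → ℕ)
    (ha0 : a 0 = 0) (hmono : StrictMonoOn a (Set.Iic m))
    (haK : ∀ j ≤ m, a j ≤ K)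
    (hP0 : ∀ u, P u 0 = 0) (hPnn : ∀ u k, 0 ≤ P u k)
    (hpeak : ∀ u, 1 ≤ p u ∧ p u ≤ K)
    (hup : ∀ u, ∀ i j : ℕ, i ≤ j → j ≤ p u → P u i ≤ P u j)
    (hdown : ∀ u, ∀ i j : ℕ, p u ≤ i → i ≤ j → j ≤ K → P u j ≤ P u i) :
    ∑ u : Fin U,
        ((Finset.Icc 1 m).image a).sup'
          ((Finset.nonempty_Icc.mpr hm).image a) (P u)
      = (∑ j ∈ Finset.Icc 1 m,
          ∑ u ∈ Finset.univ.filter (fun u : Fin U => a (j - 1) < p u ∧ p u ≤ a j),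
            max (P u (a (j - 1))) (P u (a j)))
        + ∑ u ∈ Finset.univ.filter (fun u : Fin U => a m < p u), P u (a m) := by
  classical
  have hmon : ∀ i j : ℕ, i ≤ j → j ≤ m → a i ≤ a j := by
    intro i j hij hj
    exact hmono.monotoneOn (Set.mem_Iic.mpr (hij.trans hj)) (Set.mem_Iic.mpr hj) hij
  -- rewrite the double sum by swapping
  have hswap :
      (∑ j ∈ Finset.Icc 1 m,
          ∑ u ∈ Finset.univ.filter (fun u : Fin U => a (j - 1) < p u ∧ p u ≤ a j),
            max (P u (a (j - 1))) (P u (a j)))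
        = ∑ u : Fin U, ∑ j ∈ (Finset.Icc 1 m).filter
            (fun j => a (j - 1) < p u ∧ p u ≤ a j),
            max (P u (a (j - 1))) (P u (a j)) := by
    have h1 : ∀ j ∈ Finset.Icc 1 m,
        (∑ u ∈ Finset.univ.filter (fun u : Fin U => a (j - 1) < p u ∧ p u ≤ a j),
            max (P u (a (j - 1))) (P u (a j)))
          = ∑ u : Fin U, if a (j - 1) < p u ∧ p u ≤ a j then
              max (P u (a (j - 1))) (P u (a j)) else 0 := by
      intro j _; rw [Finset.sum_filter]
    rw [Finset.sum_congr rfl h1, Finset.sum_comm]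
    refine Finset.sum_congr rfl fun u _ => ?_
    rw [Finset.sum_filter]
  have hlast :
      (∑ u ∈ Finset.univ.filter (fun u : Fin U => a m < p u), P u (a m))
        = ∑ u : Fin U, if a m < p u then P u (a m) else 0 := by
    rw [Finset.sum_filter]
  rw [hswap, hlast, ← Finset.sum_add_distrib]
  refine Finset.sum_congr rfl fun u _ => ?_
  set S := (Finset.Icc 1 m).image a with hS
  have hne : S.Nonempty := (Finset.nonempty_Icc.mpr hm).image a
  by_cases h : a m < p u
  · -- peak beyond a m
    have hfilt : (Finset.Icc 1 m).filter (fun j => a (j - 1) < p u ∧ p u ≤ a j)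
        = ∅ := by
      refine Finset.filter_false_of_mem fun j hj => ?_
      simp only [Finset.mem_Icc] at hj
      intro hcond
      have : a j ≤ a m := hmon j m hj.2 le_rfl
      omega
    rw [hfilt]
    simp only [Finset.sum_empty, if_pos h, zero_add]
    have hle : S.sup' hne (P u) ≤ P u (a m) := by
      refine Finset.sup'_le _ _ fun k hk => ?_
      obtain ⟨j, hj, rfl⟩ := Finset.mem_image.mp hk
      simp only [Finset.mem_Icc] at hj
      exact hup u (a j) (a m) (hmon j m hj.2 le_rfl) (le_of_lt h)
    have hge : P u (a m) ≤ S.sup' hne (P u) :=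
      Finset.le_sup' _ (Finset.mem_image.mpr ⟨m, Finset.mem_Icc.mpr ⟨hm, le_rfl⟩, rfl⟩)
    linarith
  · -- peak within the range
    push_neg at h
    have hpu1 : 1 ≤ p u := (hpeak u).1
    have hex : ∃ j, 1 ≤ j ∧ p u ≤ a j := ⟨m, hm, h⟩
    have hspec := Nat.find_spec hex
    have hminlt := fun k (hk : k < Nat.find hex) => Nat.find_min hex hk
    set j := Nat.find hex with hjdef
    obtain ⟨hj1, hja⟩ := hspec
    have hjm : j ≤ m := Nat.find_min' hex ⟨hm, h⟩
    have hjlt : a (j - 1) < p u := by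
      rcases Nat.lt_or_ge 1 j with h2 | h2
      · have := hminlt (j - 1) (by omega)
        push_neg at this
        by_contra hc
        push_neg at hc
        exact absurd (this (by omega)) (by omega)
      · have hj1' : j = 1 := le_antisymm h2 hj1
        rw [hj1']
        simpa [ha0] using Nat.lt_of_lt_of_le Nat.zero_lt_one hpu1
    have hfilt : (Finset.Icc 1 m).filter (fun j' => a (j' - 1) < p u ∧ p u ≤ a j')
        = {j} := by
      ext j'
      simp only [Finset.mem_filter, Finset.mem_Icc, Finset.mem_singleton]
      constructor
      · rintro ⟨⟨h1, h2⟩, h3, h4⟩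
        by_contra hne'
        rcases Nat.lt_or_ge j' j with hlt | hge
        · have : a j' ≤ a (j - 1) := hmon j' (j - 1) (by omega) (by omega)
          omega
        · have hgt : j < j' := by omega
          have : a j ≤ a (j' - 1) := hmon j (j' - 1) (by omega) (by omega)
          omega
      · rintro rfl
        exact ⟨⟨hj1, hjm⟩, hjlt, hja⟩
    rw [hfilt]
    simp only [Finset.sum_singleton, if_neg (not_lt.mpr h), add_zero]
    have hajK : a j ≤ K := haK j hjm
    have hle : S.sup' hne (P u) ≤ max (P u (a (j - 1))) (P u (a j)) := by
      refine Finset.sup'_le _ _ fun k hk => ?_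
      obtain ⟨i, hi, rfl⟩ := Finset.mem_image.mp hk
      simp only [Finset.mem_Icc] at hi
      rcases Nat.lt_or_ge i j with hlt | hge
      · have h1 : a i ≤ a (j - 1) := hmon i (j - 1) (by omega) (by omega)
        exact le_max_of_le_left (hup u (a i) (a (j - 1)) h1 (le_of_lt hjlt))
      · have h1 : a j ≤ a i := hmon j i hge hi.2
        exact le_max_of_le_right (hdown u (a j) (a i) hja h1 (haK i hi.2))
    have hgej : P u (a j) ≤ S.sup' hne (P u) :=
      Finset.le_sup' _ (Finset.mem_image.mpr ⟨j, Finset.mem_Icc.mpr ⟨hj1, hjm⟩, rfl⟩)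
    have hgejm : P u (a (j - 1)) ≤ S.sup' hne (P u) := by
      rcases Nat.lt_or_ge 1 j with h2 | h2
      · exact Finset.le_sup' _ (Finset.mem_image.mpr
          ⟨j - 1, Finset.mem_Icc.mpr ⟨by omega, by omega⟩, rfl⟩)
      · have hj1' : j = 1 := le_antisymm h2 hj1
        rw [hj1']
        simp only [Nat.sub_self, ha0, hP0]
        exact le_trans (hPnn u (a j)) hgej
    exact le_antisymm hle (max_le hgejm hgej)
end
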